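/- Let H be a β-acyclic hypergraph with β-elimination order < and edge order <_H. Let x ≤ y be vertices and e ≤_H f edges such that there is a common vertex z with z ∈ V(H_e^x), z ∈ V(H_f^y), and z ≤ x. Then H_e^x ⊆ H_f^y. -/

import Mathlib

variable {V : Type*} [LinearOrder V]

/-- The colexicographic order on edges: `e <_H f` iff `max (e Δ f) ∈ f`. -/
def edgeLT (e f : Finset V) : Prop :=
  ∃ hne : (symmDiff e f).Nonempty, (symmDiff e f).max' hne ∈ f

def edgeLE (e f : Finset V) : Prop := e = f ∨ edgeLT e f

/-- The linear order on `V` is a β-elimination order for the hypergraph `H`. -/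
def IsBetaElim (H : Finset (Finset V)) : Prop :=
  ∀ x : V, ∀ e ∈ H, ∀ f ∈ H, x ∈ e → x ∈ f →
    (e.filter fun y => x < y) ⊆ f ∨ (f.filter fun y => x < y) ⊆ e

/-- A walk starting at edge `e` and continuing through the vertex/edge pairs in `p`. -/
def WalkAux (H : Finset (Finset V)) : Finset V → List (V × Finset V) → Prop
  | _, [] => True
  | e, (x, f) :: p => x ∈ e ∧ x ∈ f ∧ f ∈ H ∧ WalkAux H f p

def lastEdge (e : Finset V) (p : List (V × Finset V)) : Finset V :=
  (p.map Prod.snd).getLastD e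

/-- `p` is a walk from edge `e` to edge `f` in `H`. -/
def IsWalk (H : Finset (Finset V)) (e f : Finset V) (p : List (V × Finset V)) : Prop :=
  e ∈ H ∧ WalkAux H e p ∧ lastEdge e p = f

/-- A path: a walk with pairwise distinct edges and pairwise distinct vertices. -/
def IsPath (H : Finset (Finset V)) (e f : Finset V) (p : List (V × Finset V)) : Prop :=
  IsWalk H e f p ∧ (e :: p.map Prod.snd).Nodup ∧ (p.map Prod.fst).Nodup

/-- `f ∈ H_e^x`: there is a walk from `f` to `e` using only edges `≤_H e` and
vertices `≤ x`. -/
def memHex (H : Finset (Finset V)) (e : Finset V) (x : V) (f : Finset V) : Prop :=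
  ∃ p, IsWalk H f e p ∧ edgeLE f e ∧ ∀ q ∈ p, edgeLE q.2 e ∧ q.1 ≤ x

/-!
Walks may be concatenated and reversed, so the edges reachable by a walk whose edges are
`≤_H e` and whose vertices are `≤ x` form an equivalence class, and enlarging the bounds
`(e, x)` to `(f, y)` only merges classes. A walk from `g ∈ H_e^x` back to `e`, then to the
edge of `H_e^x` containing `z`, across `z` into the edge of `H_f^y` containing `z` and on to
`f`, stays within the bounds `(f, y)`.
-/

lemma edgeLE_iff_toColex_le {e f : Finset V} : edgeLE e f ↔ toColex e ≤ toColex f := by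
  rw [edgeLE, edgeLT, le_iff_eq_or_lt, Finset.Colex.toColex_lt_toColex_iff_max'_mem, toColex_inj]
  exact or_congr_right ⟨fun ⟨hne, hm⟩ => ⟨fun h => by simp [h] at hne, hm⟩,
    fun ⟨hne, hm⟩ => ⟨Finset.symmDiff_nonempty.2 hne, hm⟩⟩

lemma edgeLE.trans {a b c : Finset V} (hab : edgeLE a b) (hbc : edgeLE b c) : edgeLE a c := by
  rw [edgeLE_iff_toColex_le] at *
  exact hab.trans hbc

lemma lastEdge_cons {α : Type*} (e f : Finset α) (x : α) (p : List (α × Finset α)) :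
    lastEdge e ((x, f) :: p) = lastEdge f p := by
  simp only [lastEdge, List.map_cons, List.getLastD_cons]

lemma lastEdge_append {α : Type*} (e : Finset α) (p q : List (α × Finset α)) :
    lastEdge e (p ++ q) = lastEdge (lastEdge e p) q := by
  induction p generalizing e with
  | nil => rfl
  | cons s p ih => rw [List.cons_append, lastEdge_cons, lastEdge_cons, ih]

lemma WalkAux.append {α : Type*} {H : Finset (Finset α)} {e : Finset α}
    {p q : List (α × Finset α)} (hp : WalkAux H e p) (hq : WalkAux H (lastEdge e p) q) :
    WalkAux H e (p ++ q) := by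
  induction p generalizing e with
  | nil => simpa [lastEdge] using hq
  | cons s p ih =>
    obtain ⟨x, f⟩ := s
    obtain ⟨hxe, hxf, hf, hp⟩ := hp
    rw [lastEdge_cons] at hq
    exact ⟨hxe, hxf, hf, ih hp hq⟩

lemma IsWalk.append {α : Type*} {H : Finset (Finset α)} {a b c : Finset α}
    {p q : List (α × Finset α)} (hp : IsWalk H a b p) (hq : IsWalk H b c q) :
    IsWalk H a c (p ++ q) := by
  obtain ⟨ha, hpa, rfl⟩ := hp
  obtain ⟨-, hqa, rfl⟩ := hq
  exact ⟨ha, hpa.append hqa, lastEdge_append a p q⟩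

/-- `memHex` with the target edge freed from the bound: `memHex H e x g` is by definition
`WalkWithin H e x g e`. -/
def WalkWithin (H : Finset (Finset V)) (e : Finset V) (x : V) (a b : Finset V) : Prop :=
  ∃ p, IsWalk H a b p ∧ edgeLE a e ∧ ∀ q ∈ p, edgeLE q.2 e ∧ q.1 ≤ x

namespace WalkWithin

variable {H : Finset (Finset V)} {e f a b c : Finset V} {x y z : V}

lemma mem_left (h : WalkWithin H e x a b) : a ∈ H := h.choose_spec.1.1

lemma edgeLE_left (h : WalkWithin H e x a b) : edgeLE a e := h.choose_spec.2.1

lemma refl (ha : a ∈ H) (hae : edgeLE a e) : WalkWithin H e x a a :=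
  ⟨[], ⟨ha, trivial, rfl⟩, hae, by simp⟩

lemma of_mem_inter (ha : a ∈ H) (hb : b ∈ H) (hae : edgeLE a e) (hbe : edgeLE b e)
    (hza : z ∈ a) (hzb : z ∈ b) (hzx : z ≤ x) : WalkWithin H e x a b :=
  ⟨[(z, b)], ⟨ha, ⟨hza, hzb, hb, trivial⟩, rfl⟩, hae, by simp [hbe, hzx]⟩

lemma trans (hab : WalkWithin H e x a b) (hbc : WalkWithin H e x b c) :
    WalkWithin H e x a c := by
  obtain ⟨p, hp, hae, hpb⟩ := hab
  obtain ⟨q, hq, -, hqb⟩ := hbc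
  refine ⟨p ++ q, hp.append hq, hae, fun s hs => ?_⟩
  rcases List.mem_append.1 hs with hs | hs
  exacts [hpb s hs, hqb s hs]

lemma symm (h : WalkWithin H e x a b) : WalkWithin H e x b a := by
  obtain ⟨p, ⟨ha, hpa, rfl⟩, hae, hpb⟩ := h
  induction p generalizing a with
  | nil => exact refl ha hae
  | cons s p ih =>
    obtain ⟨z, c⟩ := s
    obtain ⟨hza, hzc, hc, hpc⟩ := hpa
    have ⟨hce, hzx⟩ := hpb (z, c) List.mem_cons_self
    rw [lastEdge_cons]
    exact (ih hc hpc hce fun s hs => hpb s (List.mem_cons_of_mem _ hs)).trans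
      (of_mem_inter hc ha hce hae hzc hza hzx)

lemma mono (hef : edgeLE e f) (hxy : x ≤ y) (h : WalkWithin H e x a b) :
    WalkWithin H f y a b := by
  obtain ⟨p, hp, hae, hpb⟩ := h
  exact ⟨p, hp, hae.trans hef, fun s hs => ⟨(hpb s hs).1.trans hef, (hpb s hs).2.trans hxy⟩⟩

end WalkWithin

theorem hex_inclusion_general {V : Type*} [LinearOrder V] (H : Finset (Finset V))
    (x y : V) (hxy : x ≤ y) (e f : Finset V)
    (hef : edgeLE e f) (z : V)
    (hz1 : ∃ g, memHex H e x g ∧ z ∈ g)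
    (hz2 : ∃ g, memHex H f y g ∧ z ∈ g)
    (hzx : z ≤ x) :
    ∀ g, memHex H e x g → memHex H f y g := by
  obtain ⟨g₁, hg₁ : WalkWithin H e x g₁ e, hzg₁⟩ := hz1
  obtain ⟨g₂, hg₂ : WalkWithin H f y g₂ f, hzg₂⟩ := hz2
  intro g (hg : WalkWithin H e x g e)
  have hg₁g₂ : WalkWithin H f y g₁ g₂ :=
    .of_mem_inter hg₁.mem_left hg₂.mem_left (hg₁.edgeLE_left.trans hef) hg₂.edgeLE_left
      hzg₁ hzg₂ (hzx.trans hxy)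
  exact ((hg.trans hg₁.symm).mono hef hxy).trans (hg₁g₂.trans hg₂)

theorem hex_inclusion {V : Type*} [LinearOrder V] (H : Finset (Finset V))
    (hβ : IsBetaElim H) (x y : V) (hxy : x ≤ y) (e f : Finset V)
    (he : e ∈ H) (hf : f ∈ H) (hef : edgeLE e f) (z : V)
    (hz1 : ∃ g, memHex H e x g ∧ z ∈ g)
    (hz2 : ∃ g, memHex H f y g ∧ z ∈ g)
    (hzx : z ≤ x) :
    ∀ g, memHex H e x g → memHex H f y g :=
  hex_inclusion_general H x y hxy e f hef z hz1 hz2 hzx
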